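/- The Graver basis G(A) is a test set for minimizing any separable convex function f over S = {x ∈ ℤ^n : Ax = b, l ≤ x ≤ u}: if x̄ ∈ S is not optimal, then there exist g ∈ G(A) and λ ∈ ℤ_{>0} with x̄ + λg ∈ S and f(x̄ + λg) < f(x̄). -/

import Mathlib

/-!
Write `x = x̄ + y` with `Ay = 0`. For a separable convex objective `F`, convexity of each `f_j`
gives `F(x̄ + h) + F(x̄ + (z - h)) ≤ F(x̄) + F(x̄ + z)` whenever `h ⊑ z`. Hence if an improving
direction `z` is not ⊑-minimal in `ker A`, one of the two parts of a conformal splitting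
`z = h + (z - h)` improves as well. A ⊑-minimal improving direction `g ⊑ y` is therefore a Graver
element, and `x̄ + g` lies coordinatewise between `x̄` and `x`, hence in the box `[l, u]`.
-/

open Set

theorem ConvexOn.map_add_add_le_map_add_map_add {φ : ℝ → ℝ} (hφ : ConvexOn ℝ univ φ)
    (a s t : ℝ) (hst : 0 ≤ s * t) : φ (a + s) + φ (a + t) ≤ φ a + φ (a + s + t) := by
  rcases eq_or_ne (s + t) 0 with h0 | h0
  · obtain ⟨rfl, rfl⟩ : s = 0 ∧ t = 0 := by constructor <;> nlinarith
    simp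
  -- `a + s` and `a + t` are the convex combinations of `a` and `a + s + t` with swapped weights.
  have weight_nonneg : ∀ r, 0 ≤ r * (s + t) → 0 ≤ r / (s + t) := fun r hr => by
    rw [← mul_div_mul_right r (s + t) h0]
    exact div_nonneg hr (mul_self_nonneg _)
  have hs := weight_nonneg s (by nlinarith [mul_self_nonneg s])
  have ht := weight_nonneg t (by nlinarith [mul_self_nonneg t])
  have hsum : t / (s + t) + s / (s + t) = 1 := by field_simp; ring
  have e₁ := hφ.2 (mem_univ a) (mem_univ (a + s + t)) ht hs hsum
  have e₂ := hφ.2 (mem_univ a) (mem_univ (a + s + t)) hs ht (by rwa [add_comm])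
  have c₁ : (t / (s + t)) • a + (s / (s + t)) • (a + s + t) = a + s := by
    simp only [smul_eq_mul]; field_simp; ring
  have c₂ : (s / (s + t)) • a + (t / (s + t)) • (a + s + t) = a + t := by
    simp only [smul_eq_mul]; field_simp; ring
  rw [c₁] at e₁
  rw [c₂] at e₂
  simp only [smul_eq_mul] at e₁ e₂
  linear_combination e₁ + e₂ + (φ a + φ (a + s + t)) * hsum

section ConformalLE

variable {ι : Type*}

def ConformalLE (x y : ι → ℤ) : Prop :=
  ∀ i, 0 ≤ x i * y i ∧ |x i| ≤ |y i|

local infix:50 " ⊑ " => ConformalLE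

theorem conformalLE_iff {x y : ι → ℤ} :
    x ⊑ y ↔ ∀ i, 0 ≤ x i ∧ x i ≤ y i ∨ y i ≤ x i ∧ x i ≤ 0 := by
  refine forall_congr' fun i => ⟨fun ⟨hmul, habs⟩ => ?_, ?_⟩
  · rcases le_total 0 (x i) with hx | hx <;> rcases le_total 0 (y i) with hy | hy
    · rw [abs_of_nonneg hx, abs_of_nonneg hy] at habs; omega
    · rw [abs_of_nonneg hx, abs_of_nonpos hy] at habs
      rcases mul_eq_zero.1 (le_antisymm (mul_nonpos_of_nonneg_of_nonpos hx hy) hmul) with h | h <;>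
        omega
    · rw [abs_of_nonpos hx, abs_of_nonneg hy] at habs
      rcases mul_eq_zero.1 (le_antisymm (mul_nonpos_of_nonpos_of_nonneg hx hy) hmul) with h | h <;>
        omega
    · rw [abs_of_nonpos hx, abs_of_nonpos hy] at habs; omega
  · rintro (⟨h₀, h₁⟩ | ⟨h₀, h₁⟩)
    · exact ⟨mul_nonneg h₀ (h₀.trans h₁),
        by rw [abs_of_nonneg h₀, abs_of_nonneg (h₀.trans h₁)]; exact h₁⟩
    · exact ⟨mul_nonneg_of_nonpos_of_nonpos h₁ (h₀.trans h₁),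
        by rw [abs_of_nonpos h₁, abs_of_nonpos (h₀.trans h₁)]; omega⟩

theorem ConformalLE.refl (x : ι → ℤ) : x ⊑ x :=
  fun _ => ⟨mul_self_nonneg _, le_rfl⟩

theorem ConformalLE.trans {x y z : ι → ℤ} (hxy : x ⊑ y) (hyz : y ⊑ z) : x ⊑ z := by
  rw [conformalLE_iff] at *
  intro i
  have := hxy i
  have := hyz i
  omega

theorem ConformalLE.sub_left {x y : ι → ℤ} (h : x ⊑ y) : y - x ⊑ y := by
  rw [conformalLE_iff] at *
  intro i
  have := h i
  simp only [Pi.sub_apply]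
  omega

theorem ConformalLE.mul_sub_nonneg {x y : ι → ℤ} (h : x ⊑ y) (i : ι) : 0 ≤ x i * (y i - x i) := by
  rcases conformalLE_iff.1 h i with ⟨h₀, h₁⟩ | ⟨h₀, h₁⟩
  · exact mul_nonneg h₀ (by omega)
  · exact mul_nonneg_of_nonpos_of_nonpos h₁ (by omega)

theorem ConformalLE.sum_natAbs_lt [Fintype ι] {x y : ι → ℤ} (h : x ⊑ y) (hne : x ≠ y) :
    ∑ i, (x i).natAbs < ∑ i, (y i).natAbs := by
  rw [conformalLE_iff] at h
  obtain ⟨j, hj⟩ := Function.ne_iff.1 hne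
  refine Finset.sum_lt_sum (fun i _ => ?_) ⟨j, Finset.mem_univ j, ?_⟩
  · have := h i; omega
  · have := h j; omega

theorem ConformalLE.add_mem_box {x p q l u : ι → ℤ} (h : x ⊑ q - p)
    (hp : ∀ i, l i ≤ p i ∧ p i ≤ u i) (hq : ∀ i, l i ≤ q i ∧ q i ≤ u i) :
    ∀ i, l i ≤ (p + x) i ∧ (p + x) i ≤ u i := by
  rw [conformalLE_iff] at h
  intro i
  have := h i
  have := hp i
  have := hq i
  simp only [Pi.add_apply, Pi.sub_apply] at *
  omega

variable [Fintype ι]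

def separableSum (f : ι → ℝ → ℝ) (x : ι → ℤ) : ℝ :=
  ∑ j, f j (x j)

theorem separableSum_add_add_le {f : ι → ℝ → ℝ} (hf : ∀ j, ConvexOn ℝ univ (f j))
    (x h k : ι → ℤ) (hhk : ∀ i, 0 ≤ h i * k i) :
    separableSum f (x + h) + separableSum f (x + k) ≤
      separableSum f x + separableSum f (x + h + k) := by
  simp only [separableSum, ← Finset.sum_add_distrib]
  refine Finset.sum_le_sum fun j _ => ?_
  have := (hf j).map_add_add_le_map_add_map_add (x j) (h j) (k j) (by exact_mod_cast hhk j)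
  simpa only [Pi.add_apply, Int.cast_add] using this

def IsGraverElement (L : AddSubgroup (ι → ℤ)) (g : ι → ℤ) : Prop :=
  g ∈ L ∧ g ≠ 0 ∧ ∀ h ∈ L, h ≠ 0 → h ⊑ g → h = g

theorem exists_isGraverElement_improving (L : AddSubgroup (ι → ℤ)) {f : ι → ℝ → ℝ}
    (hf : ∀ j, ConvexOn ℝ univ (f j)) (x y : ι → ℤ) (hy : y ∈ L)
    (hlt : separableSum f (x + y) < separableSum f x) :
    ∃ g, IsGraverElement L g ∧ g ⊑ y ∧ separableSum f (x + g) < separableSum f x := by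
  set S := {z | z ∈ L ∧ z ≠ 0 ∧ z ⊑ y ∧ separableSum f (x + z) < separableSum f x}
  have hyS : y ∈ S := ⟨hy, by rintro rfl; simp at hlt, ConformalLE.refl y, hlt⟩
  obtain ⟨z, ⟨hzL, hz0, hzy, hzlt⟩, hmin⟩ :=
    (measure fun z : ι → ℤ => ∑ i, (z i).natAbs).wf.has_min S ⟨y, hyS⟩
  refine ⟨z, ⟨hzL, hz0, fun h hhL hh0 hhz => ?_⟩, hzy, hzlt⟩
  by_contra hne
  have hsplit := separableSum_add_add_le hf x h (z - h) hhz.mul_sub_nonneg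
  rw [add_assoc, add_sub_cancel] at hsplit
  rcases lt_or_ge (separableSum f (x + h)) (separableSum f x) with hhlt | hhge
  · exact hmin h ⟨hhL, hh0, hhz.trans hzy, hhlt⟩ (hhz.sum_natAbs_lt hne)
  · refine hmin (z - h) ⟨L.sub_mem hzL hhL, sub_ne_zero.2 (Ne.symm hne),
      hhz.sub_left.trans hzy, by linarith⟩ (hhz.sub_left.sum_natAbs_lt ?_)
    simpa [sub_eq_self] using hh0

end ConformalLE

/-- The Graver basis is a test set for separable convex minimization over
`S = {x ∈ ℤⁿ : Ax = b, l ≤ x ≤ u}`: any non-optimal `x̄ ∈ S` admits an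
augmenting step `x̄ + λ g` with `g ∈ G(A)` and `λ ∈ ℤ_{>0}`. -/
theorem graver_is_test_set (m n : ℕ) (A : Matrix (Fin m) (Fin n) ℤ)
    (b : Fin m → ℤ) (l u : Fin n → ℤ)
    (f : Fin n → ℝ → ℝ) (hf : ∀ j, ConvexOn ℝ Set.univ (f j))
    (F : (Fin n → ℤ) → ℝ) (hF : ∀ x, F x = ∑ j, f j (x j : ℝ))
    (xbar : Fin n → ℤ)
    (hxbar : A.mulVec xbar = b ∧ ∀ i, l i ≤ xbar i ∧ xbar i ≤ u i)
    (hnonopt : ∃ x : Fin n → ℤ,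
      (A.mulVec x = b ∧ ∀ i, l i ≤ x i ∧ x i ≤ u i) ∧ F x < F xbar) :
    ∃ (g : Fin n → ℤ) (lam : ℤ),
      (A.mulVec g = 0 ∧ g ≠ 0 ∧
        ∀ h : Fin n → ℤ, A.mulVec h = 0 → h ≠ 0 →
          (∀ i, 0 ≤ h i * g i ∧ |h i| ≤ |g i|) → h = g) ∧
      0 < lam ∧
      (A.mulVec (xbar + lam • g) = b ∧
        ∀ i, l i ≤ (xbar + lam • g) i ∧ (xbar + lam • g) i ≤ u i) ∧
      F (xbar + lam • g) < F xbar := by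
  obtain ⟨x, ⟨hxA, hxlu⟩, hlt⟩ := hnonopt
  obtain rfl : F = separableSum f := funext hF
  set L := (LinearMap.ker A.mulVecLin).toAddSubgroup
  have hL : ∀ h, h ∈ L ↔ A.mulVec h = 0 := fun h => by simp [L]
  obtain ⟨g, ⟨hgL, hg0, hmin⟩, hgx, hglt⟩ :=
    exists_isGraverElement_improving L hf xbar (x - xbar)
      (by rw [hL, Matrix.mulVec_sub, hxA, hxbar.1, sub_self]) (by rwa [add_sub_cancel])
  refine ⟨g, 1, ⟨(hL g).1 hgL, hg0, fun h hh => hmin h ((hL h).2 hh)⟩, one_pos, ⟨?_, ?_⟩, ?_⟩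
  · rw [one_smul, Matrix.mulVec_add, (hL g).1 hgL, hxbar.1, add_zero]
  · rw [one_smul]
    exact hgx.add_mem_box hxbar.2 hxlu
  · rwa [one_smul]
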